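/- Given distinct z1,…,zn ∈ D and α = (0,…,0,1) ∈ ℂ^n, one has d_α(z_i, z_j) = 0 for 1 ≤ i, j ≤ n−1, and d_α(z_i, z_n) = ∏_{l=1}^{n−1} |(z_l − z_n)/(1 − conj(z_l)·z_n)| for 1 ≤ i ≤ n−1. -/

import Mathlib

/-!
An admissible `f` vanishes at `z₁, …, z_{n-1}`, because `α` does there. Hence
`d_α(zᵢ, zⱼ) = 0` for `i, j < n` and `d_α(zᵢ, zₙ) = |f(zₙ)|`. Dividing these zeros out
one Möbius factor at a time, Schwarz–Pick bounds `|f(zₙ)|` by the Blaschke product with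
zeros `z₁, …, z_{n-1}` evaluated at `zₙ`, and that Blaschke product is itself admissible.
-/

open Complex Metric Set

noncomputable def pdist (a b : ℂ) : ℝ := ‖(a - b) / (1 - (starRingEnd ℂ) a * b)‖

noncomputable def dInvD (n : ℕ) (z : Fin n → ℂ) (α : Fin n → ℂ) (i j : Fin n) : ℝ :=
  sSup {r : ℝ | ∃ f : ℂ → ℂ, DifferentiableOn ℂ f (ball (0:ℂ) 1) ∧
    MapsTo f (ball (0:ℂ) 1) (ball (0:ℂ) 1) ∧ (∃ c : ℂ, ∀ k, f (z k) = c * α k) ∧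
    r = pdist (f (z i)) (f (z j))}

open ComplexConjugate Topology

noncomputable def mobius (a w : ℂ) : ℂ := (a - w) / (1 - conj a * w)

lemma norm_mobius (a w : ℂ) : ‖mobius a w‖ = pdist a w := rfl

@[simp] lemma mobius_self (a : ℂ) : mobius a a = 0 := by simp [mobius]

@[simp] lemma mobius_zero (a : ℂ) : mobius a 0 = a := by simp [mobius]

@[simp] lemma pdist_zero_left (b : ℂ) : pdist 0 b = ‖b‖ := by simp [pdist]

section Mobius

variable {a w : ℂ}

lemma one_sub_conj_mul_ne_zero (ha : ‖a‖ < 1) (hw : ‖w‖ < 1) : 1 - conj a * w ≠ 0 := by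
  refine sub_ne_zero.2 fun h => ?_
  have : ‖conj a * w‖ < 1 := by
    rw [norm_mul, Complex.norm_conj]
    nlinarith [norm_nonneg a, norm_nonneg w]
  rw [← h, norm_one] at this
  exact this.false

lemma normSq_one_sub_conj_mul_sub_normSq_sub (a w : ℂ) :
    normSq (1 - conj a * w) - normSq (a - w) = (1 - normSq a) * (1 - normSq w) := by
  simp only [normSq_apply, sub_re, sub_im, mul_re, mul_im, one_re, one_im, conj_re, conj_im]
  ring

lemma pdist_lt_one (ha : ‖a‖ < 1) (hw : ‖w‖ < 1) : pdist a w < 1 := by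
  have hna : normSq a < 1 := by rw [← Complex.sq_norm]; nlinarith [norm_nonneg a]
  have hnw : normSq w < 1 := by rw [← Complex.sq_norm]; nlinarith [norm_nonneg w]
  have hlt : normSq (a - w) < normSq (1 - conj a * w) := by
    nlinarith [normSq_one_sub_conj_mul_sub_normSq_sub a w]
  rw [pdist, norm_div, div_lt_one (norm_pos_iff.2 (one_sub_conj_mul_ne_zero ha hw)),
    norm_def, norm_def]
  exact Real.sqrt_lt_sqrt (normSq_nonneg _) hlt

lemma mobius_mem_ball (ha : ‖a‖ < 1) (hw : w ∈ ball (0 : ℂ) 1) :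
    mobius a w ∈ ball (0 : ℂ) 1 :=
  mem_ball_zero_iff.2 (pdist_lt_one ha (mem_ball_zero_iff.1 hw))

lemma mobius_ne_zero (ha : ‖a‖ < 1) (hw : ‖w‖ < 1) (hne : w ≠ a) : mobius a w ≠ 0 :=
  div_ne_zero (sub_ne_zero.2 hne.symm) (one_sub_conj_mul_ne_zero ha hw)

lemma mobius_mobius (ha : ‖a‖ < 1) (hw : ‖w‖ < 1) : mobius a (mobius a w) = w := by
  have hw' := one_sub_conj_mul_ne_zero ha hw
  have ha' := one_sub_conj_mul_ne_zero ha ha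
  have hden : 1 - conj a * mobius a w = (1 - conj a * a) / (1 - conj a * w) := by
    rw [mobius]; field_simp; ring
  rw [mobius, hden, div_eq_iff (div_ne_zero ha' hw'), mobius, mul_div_assoc', eq_div_iff hw',
    sub_mul, div_mul_cancel₀ _ hw']
  ring

lemma differentiableOn_mobius (ha : ‖a‖ < 1) :
    DifferentiableOn ℂ (mobius a) (ball (0 : ℂ) 1) :=
  ((differentiableOn_const a).sub differentiableOn_id).div
    ((differentiableOn_const 1).sub ((differentiableOn_const _).mul differentiableOn_id))
    fun _ hu => one_sub_conj_mul_ne_zero ha (mem_ball_zero_iff.1 hu)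

end Mobius

section Blaschke

variable {f : ℂ → ℂ} {a w : ℂ}

/-- Schwarz lemma transported by the involution `mobius a`, which swaps `0` and `a`. -/
lemma norm_le_pdist_of_apply_eq_zero (hf : DifferentiableOn ℂ f (ball 0 1))
    (hmaps : MapsTo f (ball 0 1) (closedBall 0 1)) (ha : ‖a‖ < 1) (h0 : f a = 0)
    (hw : ‖w‖ < 1) : ‖f w‖ ≤ pdist a w := by
  have hφ : MapsTo (mobius a) (ball 0 1) (ball 0 1) := fun _ hu => mobius_mem_ball ha hu
  have hschwarz :=
    Complex.norm_le_norm_of_mapsTo_ball (hf.comp (differentiableOn_mobius ha) hφ) (hmaps.comp hφ)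
      (by rwa [Function.comp_apply, mobius_zero]) (z := mobius a w) (pdist_lt_one ha hw)
  rwa [Function.comp_apply, mobius_mobius ha hw] at hschwarz

lemma exists_eq_mobius_mul (hf : DifferentiableOn ℂ f (ball 0 1))
    (hmaps : MapsTo f (ball 0 1) (closedBall 0 1)) (ha : ‖a‖ < 1) (h0 : f a = 0) :
    ∃ g : ℂ → ℂ, DifferentiableOn ℂ g (ball 0 1) ∧
      MapsTo g (ball 0 1) (closedBall 0 1) ∧
      ∀ u ∈ ball (0 : ℂ) 1, f u = mobius a u * g u := by
  have ha' : ball (0 : ℂ) 1 ∈ 𝓝 a := isOpen_ball.mem_nhds (mem_ball_zero_iff.2 ha)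
  set g : ℂ → ℂ := fun u => (conj a * u - 1) * dslope f a u
  have hg : DifferentiableOn ℂ g (ball 0 1) :=
    ((differentiableOn_const _).mul differentiableOn_id |>.sub (differentiableOn_const 1)).mul
      ((differentiableOn_dslope ha').2 hf)
  have hfg : ∀ u ∈ ball (0 : ℂ) 1, f u = mobius a u * g u := by
    intro u hu
    have hD := one_sub_conj_mul_ne_zero ha (mem_ball_zero_iff.1 hu)
    have hslope := sub_smul_dslope f a u
    rw [smul_eq_mul, h0, sub_zero] at hslope
    rw [← hslope, mobius, div_mul_eq_mul_div, eq_div_iff hD]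
    ring
  have hg_punctured : ∀ u ∈ ball (0 : ℂ) 1, u ≠ a → ‖g u‖ ≤ 1 := by
    intro u hu hne
    have hpos : 0 < pdist a u :=
      norm_pos_iff.2 (mobius_ne_zero ha (mem_ball_zero_iff.1 hu) hne)
    have hle := norm_le_pdist_of_apply_eq_zero hf hmaps ha h0 (mem_ball_zero_iff.1 hu)
    rw [hfg u hu, norm_mul, norm_mobius] at hle
    exact (mul_le_iff_le_one_right hpos).1 hle
  refine ⟨g, hg, fun u hu => mem_closedBall_zero_iff.2 ?_, hfg⟩
  rcases eq_or_ne u a with rfl | hne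
  · have hlim : Filter.Tendsto (‖g ·‖) (𝓝[≠] u) (𝓝 ‖g u‖) :=
      (hg.continuousOn.continuousAt ha').norm.mono_left nhdsWithin_le_nhds
    exact le_of_tendsto hlim
      (eventually_nhdsWithin_iff.2 (Filter.eventually_of_mem ha' hg_punctured))
  · exact hg_punctured u hu hne

lemma norm_le_prod_pdist_of_apply_eq_zero {ι : Type*} (s : Finset ι) {z : ι → ℂ}
    (hinj : InjOn z s) (hz : ∀ l ∈ s, ‖z l‖ < 1) (hf : DifferentiableOn ℂ f (ball 0 1))
    (hmaps : MapsTo f (ball 0 1) (closedBall 0 1)) (h0 : ∀ l ∈ s, f (z l) = 0)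
    (hw : ‖w‖ < 1) : ‖f w‖ ≤ ∏ l ∈ s, pdist (z l) w := by
  classical
  induction s using Finset.induction_on generalizing f with
  | empty => simpa using hmaps (mem_ball_zero_iff.2 hw)
  | @insert k s hks ih =>
    have hk := hz k (Finset.mem_insert_self k s)
    obtain ⟨g, hg, hgmaps, hfg⟩ :=
      exists_eq_mobius_mul hf hmaps hk (h0 k (Finset.mem_insert_self k s))
    have hg0 : ∀ l ∈ s, g (z l) = 0 := by
      intro l hl
      have hl' : l ∈ insert k s := Finset.mem_insert_of_mem hl
      have hne : z l ≠ z k := hinj.ne (Finset.mem_coe.2 hl') (Finset.mem_coe.2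
        (Finset.mem_insert_self k s)) fun h => hks (h ▸ hl)
      simpa [mobius_ne_zero hk (hz l hl') hne, h0 l hl'] using
        (hfg (z l) (mem_ball_zero_iff.2 (hz l hl'))).symm
    rw [Finset.prod_insert hks, hfg w (mem_ball_zero_iff.2 hw), norm_mul, norm_mobius]
    exact mul_le_mul_of_nonneg_left (ih (hinj.mono (by simp))
      (fun l hl => hz l (Finset.mem_insert_of_mem hl)) hg hgmaps hg0) (norm_nonneg _)

end Blaschke

section BlaschkeProduct

variable {ι : Type*} {s : Finset ι} {z : ι → ℂ}

noncomputable def blaschkeProduct (s : Finset ι) (z : ι → ℂ) (w : ℂ) : ℂ :=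
  ∏ l ∈ s, mobius (z l) w

lemma norm_blaschkeProduct (w : ℂ) : ‖blaschkeProduct s z w‖ = ∏ l ∈ s, pdist (z l) w :=
  norm_prod _ _

lemma blaschkeProduct_apply_eq_zero {k : ι} (hk : k ∈ s) : blaschkeProduct s z (z k) = 0 :=
  Finset.prod_eq_zero hk (mobius_self _)

lemma differentiableOn_blaschkeProduct (hz : ∀ l ∈ s, ‖z l‖ < 1) :
    DifferentiableOn ℂ (blaschkeProduct s z) (ball 0 1) :=
  DifferentiableOn.fun_finsetProd fun l hl => differentiableOn_mobius (hz l hl)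

lemma mapsTo_blaschkeProduct (hs : s.Nonempty) (hz : ∀ l ∈ s, ‖z l‖ < 1) :
    MapsTo (blaschkeProduct s z) (ball 0 1) (ball 0 1) := by
  intro w hw
  obtain ⟨i, hi⟩ := hs
  have hw' := mem_ball_zero_iff.1 hw
  rw [mem_ball_zero_iff, norm_blaschkeProduct]
  calc ∏ l ∈ s, pdist (z l) w ≤ ∏ l ∈ {i}, pdist (z l) w :=
        Finset.prod_le_prod_of_subset_of_le_one (Finset.singleton_subset_iff.2 hi)
          (fun _ _ => norm_nonneg _) fun l hl _ => (pdist_lt_one (hz l hl) hw').le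
    _ < 1 := by rw [Finset.prod_singleton]; exact pdist_lt_one (hz i hi) hw'

end BlaschkeProduct

theorem stmt12 (n : ℕ) (z : Fin (n + 1) → ℂ) (hz : ∀ j, z j ∈ ball (0:ℂ) 1)
    (hinj : Function.Injective z)
    (α : Fin (n + 1) → ℂ) (hα : α = fun j => if j = Fin.last n then 1 else 0) :
    (∀ i j, i ≠ Fin.last n → j ≠ Fin.last n → dInvD (n + 1) z α i j = 0) ∧
    (∀ i, i ≠ Fin.last n → dInvD (n + 1) z α i (Fin.last n) =
      (Finset.univ.erase (Fin.last n)).prod fun l =>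
        ‖(z l - z (Fin.last n)) / (1 - (starRingEnd ℂ) (z l) * z (Fin.last n))‖) := by
  subst hα
  set L := Fin.last n
  set s := Finset.univ.erase L
  have hz' : ∀ l, ‖z l‖ < 1 := fun l => mem_ball_zero_iff.1 (hz l)
  refine ⟨fun i j hi hj => ?_, fun i hi => ?_⟩
  · refine IsGreatest.csSup_eq ⟨⟨0, differentiableOn_const 0, fun _ _ => by simp,
      ⟨0, by simp⟩, by simp⟩, ?_⟩
    rintro r ⟨f, -, -, ⟨c, hc⟩, rfl⟩
    simp [hc i, hc j, hi, hj]
  · change dInvD (n + 1) z _ i L = ∏ l ∈ s, pdist (z l) (z L)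
    have hs : i ∈ s := Finset.mem_erase.2 ⟨hi, Finset.mem_univ i⟩
    refine IsGreatest.csSup_eq ⟨⟨blaschkeProduct s z,
      differentiableOn_blaschkeProduct fun l _ => hz' l,
      mapsTo_blaschkeProduct ⟨i, hs⟩ fun l _ => hz' l,
      ⟨blaschkeProduct s z (z L), fun k => ?_⟩, ?_⟩, ?_⟩
    · rcases eq_or_ne k L with rfl | hk
      · simp
      · simp only [if_neg hk, mul_zero]
        exact blaschkeProduct_apply_eq_zero (Finset.mem_erase.2 ⟨hk, Finset.mem_univ k⟩)
    · rw [blaschkeProduct_apply_eq_zero hs, pdist_zero_left, norm_blaschkeProduct]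
    · rintro r ⟨f, hf, hmaps, ⟨c, hc⟩, rfl⟩
      have hbound := norm_le_prod_pdist_of_apply_eq_zero s hinj.injOn (fun l _ => hz' l) hf
        (hmaps.mono_right ball_subset_closedBall)
        (fun l hl => by simpa [(Finset.mem_erase.1 hl).1] using hc l) (hz' L)
      simpa [hc i, hi] using hbound
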